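/- arXiv:2312.12839 — 2 statements merged into one kernel-verified Lean document; each statement's English description precedes it below -/
import Mathlib

section
/- Let M be a finite set with m := |M| ≥ 3. Then every union-free generic set S of partial orders on M satisfies |S| ≤ m(m−1)/2. -/
open scoped Classical

variable {M : Type*}

/-- `p ⊆ M × M` is a partial order: reflexive, antisymmetric, transitive. -/
def IsPO (p : Set (M × M)) : Prop :=
  (∀ x : M, (x, x) ∈ p) ∧ (∀ x y : M, (x, y) ∈ p → (y, x) ∈ p → x = y) ∧
  (∀ x y z : M, (x, y) ∈ p → (y, z) ∈ p → (x, z) ∈ p)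

/-- The set 𝒫 of all partial orders on `M`. -/
def Posets (M : Type*) : Set (Set (M × M)) := {p | IsPO p}

/-- The closure operator γ(P) = {p ∈ 𝒫 | ⋂P ⊆ p ⊆ ⋃P}. -/
def gam (P : Set (Set (M × M))) : Set (Set (M × M)) :=
  {q | q ∈ Posets M ∧ (⋂ p ∈ P, p) ⊆ q ∧ q ⊆ ⋃ p ∈ P, p}

/-- `S` is union-free generic: (C1) `S ⊊ γ(S)` and (C2) no family of proper
subsets of `S` has closures whose union is `γ(S)`. -/
def IsUfg (S : Set (Set (M × M))) : Prop :=
  S ⊆ Posets M ∧ S ⊂ gam S ∧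
    ¬ ∃ (ℓ : ℕ) (A : Fin ℓ → Set (Set (M × M))),
        (∀ i, A i ⊂ S) ∧ (⋃ i, gam (A i)) = gam S

/-- Monotonicity of the closure operator. -/
lemma gam_mono {A B : Set (Set (M × M))} (hAB : A ⊆ B) : gam A ⊆ gam B := by
  rintro q ⟨hq1, hq2, hq3⟩
  refine ⟨hq1, fun a ha => hq2 ?_, hq3.trans ?_⟩
  · simp only [Set.mem_iInter] at ha ⊢
    exact fun p hp => ha p (hAB hp)
  · intro a ha
    simp only [Set.mem_iUnion] at ha ⊢
    obtain ⟨p, hp, hap⟩ := ha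
    exact ⟨p, hAB hp, hap⟩

theorem stmt9 {M : Type*} [Fintype M] (hm : 3 ≤ Fintype.card M)
    (S : Set (Set (M × M))) (hS : IsUfg S) :
    S.ncard ≤ Fintype.card M * (Fintype.card M - 1) / 2 := by
  classical
  have hbound : 3 ≤ Fintype.card M * (Fintype.card M - 1) / 2 := by
    rw [Nat.le_div_iff_mul_le (by norm_num : 0 < 2)]
    have h1 : 2 ≤ Fintype.card M - 1 := by omega
    exact Nat.mul_le_mul hm h1
  by_cases hsmall : S.ncard ≤ 3
  · exact hsmall.trans hbound
  push_neg at hsmall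
  have hSfin : S.Finite := Set.toFinite S
  obtain ⟨hSP, hss, hC2⟩ := hS
  -- a third element always exists
  have hthird : ∀ p p' : Set (M × M), ∃ r ∈ S, r ≠ p ∧ r ≠ p' := by
    intro p p'
    by_contra hcon
    push_neg at hcon
    have hsub : S ⊆ {p, p'} := by
      intro r hr
      rcases eq_or_ne r p with h | h
      · simp [h]
      · simp [hcon r hr h]
    have h1 := Set.ncard_le_ncard hsub (Set.toFinite _)
    have h2 : ({p, p'} : Set (Set (M × M))).ncard ≤ 2 := by
      refine (Set.ncard_insert_le _ _).trans ?_
      simp [Set.ncard_singleton]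
    omega
  -- the key witness q : a poset in γ(S) not in any γ(S \ {p})
  have hkey : ∃ q ∈ gam S, ∀ p ∈ S, q ∉ gam (S \ {p}) := by
    by_contra hcon
    push_neg at hcon
    apply hC2
    refine ⟨hSfin.toFinset.card,
      fun i => S \ {((hSfin.toFinset.equivFin.symm i : hSfin.toFinset) : Set (M × M))}, ?_, ?_⟩
    · intro i
      have hmem : ((hSfin.toFinset.equivFin.symm i : hSfin.toFinset) : Set (M × M)) ∈ S :=
        hSfin.mem_toFinset.1 (hSfin.toFinset.equivFin.symm i).2
      exact ⟨Set.diff_subset, fun h => (h hmem).2 rfl⟩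
    · ext q
      constructor
      · intro hq
        simp only [Set.mem_iUnion] at hq
        obtain ⟨i, hi⟩ := hq
        exact gam_mono Set.diff_subset hi
      · intro hq
        obtain ⟨p, hp, hq'⟩ := hcon q hq
        simp only [Set.mem_iUnion]
        refine ⟨hSfin.toFinset.equivFin ⟨p, hSfin.mem_toFinset.2 hp⟩, ?_⟩
        simpa [Equiv.symm_apply_apply] using hq'
  obtain ⟨q, hq, hnot⟩ := hkey
  have hqPO : IsPO q := hq.1
  -- for each p ∈ S there is a "good" pair
  have hgood : ∀ p ∈ S, ∃ a : M × M, a.1 ≠ a.2 ∧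
      ((a ∈ q ∧ a ∈ p ∧ ∀ r ∈ S, r ≠ p → a ∉ r) ∨
       (a ∉ q ∧ a ∉ p ∧ ∀ r ∈ S, r ≠ p → a ∈ r)) := by
    intro p hp
    have h1 := hnot p hp
    have h2 : ¬ ((⋂ r ∈ S \ {p}, r) ⊆ q ∧ q ⊆ ⋃ r ∈ S \ {p}, r) := fun h => h1 ⟨hq.1, h.1, h.2⟩
    rw [not_and_or] at h2
    rcases h2 with h2 | h2
    · -- case B : some pair in every other poset but not in q
      rw [Set.not_subset] at h2
      obtain ⟨a, hmem, hanq⟩ := h2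
      have hall : ∀ r ∈ S, r ≠ p → a ∈ r := by
        intro r hr hrp
        simp only [Set.mem_iInter] at hmem
        exact hmem r ⟨hr, hrp⟩
      have hanp : a ∉ p := by
        intro h
        apply hanq
        apply hq.2.1
        simp only [Set.mem_iInter]
        intro r hr
        rcases eq_or_ne r p with h' | h'
        · rw [h']; exact h
        · exact hall r hr h'
      refine ⟨a, ?_, Or.inr ⟨hanq, hanp, hall⟩⟩
      obtain ⟨x, y⟩ := a
      intro heq
      simp only at heq
      subst heq
      exact hanq (hqPO.1 x)
    · -- case A : some pair of q only in p
      rw [Set.not_subset] at h2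
      obtain ⟨a, haq, hout⟩ := h2
      have hnotother : ∀ r ∈ S, r ≠ p → a ∉ r := by
        intro r hr hrp hin
        apply hout
        simp only [Set.mem_iUnion]
        exact ⟨r, ⟨hr, hrp⟩, hin⟩
      have hainp : a ∈ p := by
        have := hq.2.2 haq
        simp only [Set.mem_iUnion] at this
        obtain ⟨r, hr, har⟩ := this
        rcases eq_or_ne r p with h' | h'
        · rwa [h'] at har
        · exact absurd har (hnotother r hr h')
      refine ⟨a, ?_, Or.inl ⟨haq, hainp, hnotother⟩⟩
      obtain ⟨x, y⟩ := a
      intro heq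
      simp only at heq
      subst heq
      obtain ⟨r, hr, hrp, -⟩ := hthird p p
      exact hnotother r hr hrp ((hSP hr).1 x)
  have hMne : Nonempty M := Fintype.card_pos_iff.mp (by omega)
  inhabit M
  choose! g hgne hgcase using hgood
  set F : Set (M × M) → Finset M := fun p => {(g p).1, (g p).2} with hF
  -- injectivity of F on S
  have hinj : Set.InjOn F S := by
    intro p hp p' hp' hFeq
    by_contra hpp'
    have ha := hgcase p hp
    have hb := hgcase p' hp'
    have hane := hgne p hp
    have hbne := hgne p' hp'
    -- antisymmetry helper
    have hanti : ∀ r : Set (M × M), IsPO r → g p ∈ r → ((g p).2, (g p).1) ∈ r → False := by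
      intro r hr h1 h2
      apply hane
      exact hr.2.1 (g p).1 (g p).2 (by simpa using h1) h2
    have hab : g p' = g p ∨ g p' = ((g p).2, (g p).1) := by
      have hFeq' : ({(g p).1, (g p).2} : Finset M) = {(g p').1, (g p').2} := hFeq
      have h1 : (g p').1 ∈ ({(g p).1, (g p).2} : Finset M) := by rw [hFeq']; simp
      have h2 : (g p').2 ∈ ({(g p).1, (g p).2} : Finset M) := by rw [hFeq']; simp
      simp only [Finset.mem_insert, Finset.mem_singleton] at h1 h2
      rcases h1 with h1 | h1 <;> rcases h2 with h2 | h2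
      · exact absurd (h1.trans h2.symm) hbne
      · exact Or.inl (Prod.ext h1 h2)
      · exact Or.inr (Prod.ext h1 h2)
      · exact absurd (h1.trans h2.symm) hbne
    rcases hab with hab | hab
    · rw [hab] at hb
      rcases ha with ⟨haq, hap, honly⟩ | ⟨haq, hap, hall⟩ <;>
        rcases hb with ⟨hbq, hbp, honly'⟩ | ⟨hbq, hbp, hall'⟩
      · exact honly' p hp hpp' hap
      · exact hbq haq
      · exact haq hbq
      · exact hbp (hall p' hp' ((fun h => hpp' h.symm)))
    · rw [hab] at hb
      rcases ha with ⟨haq, hap, honly⟩ | ⟨haq, hap, hall⟩ <;>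
        rcases hb with ⟨hbq, hbp, honly'⟩ | ⟨hbq, hbp, hall'⟩
      · exact hanti q hqPO haq hbq
      · exact hanti p (hSP hp) hap (hall' p hp hpp')
      · exact hanti p' (hSP hp') (hall p' hp' ((fun h => hpp' h.symm))) hbp
      · obtain ⟨r, hr, hrp, hrp'⟩ := hthird p p'
        exact hanti r (hSP hr) (hall r hr hrp) (hall' r hr hrp')
  -- counting
  have hmaps : ∀ p ∈ hSfin.toFinset, F p ∈ Finset.univ.powersetCard 2 := by
    intro p hp
    rw [Finset.mem_powersetCard_univ]
    exact Finset.card_pair (hgne p (hSfin.mem_toFinset.1 hp))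
  have hcard := Finset.card_le_card_of_injOn F hmaps
    (by rw [Set.Finite.coe_toFinset]; exact hinj)
  rw [Finset.card_powersetCard, Finset.card_univ, Nat.choose_two_right] at hcard
  rwa [Set.ncard_eq_toFinset_card S hSfin]
end

section
/- Let M be a finite set and let ν be a probability measure on the (finite) set 𝒫 of partial orders on M. The population ufg depth D(·, ν) is identically zero if and only if either (a) ν puts its entire mass on a single partial order p, or (b) ν puts its entire mass on exactly two partial orders p₁ ⊆ p₂ such that p₂ \ p₁ contains exactly one pair, i.e., no partial order lies strictly between p₁ and p₂. -/
open scoped Classical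

variable {M : Type*}

/-- The population ufg depth of `p` w.r.t. a probability mass function `ν` on posets. -/
noncomputable def popDepth (ν : Set (M × M) → ℝ) (p : Set (M × M)) : ℝ :=
  if ∀ S : Set (Set (M × M)), IsUfg S → (∏ᶠ q ∈ S, ν q) = 0 then 0
  else (∑ᶠ S ∈ {S : Set (Set (M × M)) | IsUfg S}, ∏ᶠ q ∈ S, ν q)⁻¹ *
       ∑ᶠ S ∈ {S : Set (Set (M × M)) | IsUfg S ∧ p ∈ gam S}, ∏ᶠ q ∈ S, ν q

/-- The empirical measure of a sample of posets. -/
noncomputable def nuEmp (n : ℕ) (samp : Fin n → Set (M × M)) (q : Set (M × M)) : ℝ :=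
  (Finset.univ.filter fun i => samp i = q).card / n

/-- The empirical ufg depth. -/
noncomputable def ufgDepth (n : ℕ) (samp : Fin n → Set (M × M)) (p : Set (M × M)) : ℝ :=
  popDepth (nuEmp n samp) p

/-! ### Auxiliary lemmas -/

lemma isPO_inter {a b : Set (M × M)} (ha : IsPO a) (hb : IsPO b) : IsPO (a ∩ b) := by
  obtain ⟨ra, aa, ta⟩ := ha; obtain ⟨rb, ab, tb⟩ := hb
  exact ⟨fun x => ⟨ra x, rb x⟩, fun x y h1 h2 => aa x y h1.1 h2.1,
    fun x y z h1 h2 => ⟨ta x y z h1.1 h2.1, tb x y z h1.2 h2.2⟩⟩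

lemma subset_gam {S : Set (Set (M × M))} (hS : S ⊆ Posets M) : S ⊆ gam S := by
  intro s hs
  exact ⟨hS hs, Set.biInter_subset_of_mem hs,
    Set.subset_biUnion_of_mem (u := fun p => p) hs⟩

lemma gam_subsingleton [Nonempty M] {S : Set (Set (M × M))} (hS : S.Subsingleton) :
    gam S ⊆ S := by
  intro q hq
  rcases hS.eq_empty_or_singleton with h | ⟨x, h⟩
  · subst h
    exfalso
    obtain ⟨m⟩ := ‹Nonempty M›
    have := hq.2.2 (hq.1.1 m)
    simp at this
  · subst h
    have h1 : q ⊆ x := by simpa using hq.2.2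
    have h2 : x ⊆ q := by simpa using hq.2.1
    simp [Set.Subset.antisymm h1 h2]

lemma not_ufg_of_subsingleton [Nonempty M] {S : Set (Set (M × M))}
    (hS : S.Subsingleton) : ¬ IsUfg S := by
  intro h
  exact h.2.1.not_subset (gam_subsingleton hS)

lemma eq_pair_of_subset {α : Type*} {a b : α} {S : Set α} (h : S ⊆ {a, b})
    (hns : ¬ S.Subsingleton) : S = {a, b} := by
  obtain ⟨x, hx, y, hy, hxy⟩ := Set.not_subsingleton_iff.mp hns
  apply Set.Subset.antisymm h
  have hxa := h hx; have hya := h hy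
  intro z hz
  simp only [Set.mem_insert_iff, Set.mem_singleton_iff] at hxa hya hz
  rcases hxa with rfl | rfl <;> rcases hya with rfl | rfl <;>
    rcases hz with rfl | rfl <;> simp_all

lemma ufg_pair [Nonempty M] {a b q : Set (M × M)} (ha : a ∈ Posets M) (hb : b ∈ Posets M)
    (hab : a ≠ b) (hq : q ∈ gam {a, b}) (hqa : q ≠ a) (hqb : q ≠ b) :
    IsUfg {a, b} := by
  have hsub : ({a, b} : Set (Set (M × M))) ⊆ Posets M := by
    intro x hx
    rcases hx with rfl | hx
    · exact ha
    · rcases hx with rfl; exact hb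
  have hqnotin : q ∉ ({a, b} : Set (Set (M × M))) := by
    intro h; rcases h with rfl | h
    · exact hqa rfl
    · rcases h with rfl; exact hqb rfl
  refine ⟨hsub, ⟨subset_gam hsub, fun hcon => hqnotin (hcon hq)⟩, ?_⟩
  rintro ⟨ℓ, A, hA, hU⟩
  have hq' : q ∈ ⋃ i, gam (A i) := hU ▸ hq
  obtain ⟨i, hi⟩ := Set.mem_iUnion.mp hq'
  have hsub' : (A i).Subsingleton := by
    by_contra hns
    exact (hA i).ne (eq_pair_of_subset (hA i).subset hns)
  exact hqnotin ((hA i).subset (gam_subsingleton hsub' hi))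

lemma mem_gam_pair {a b q : Set (M × M)} (hq : IsPO q) (h1 : a ∩ b ⊆ q) (h2 : q ⊆ a ∪ b) :
    q ∈ gam {a, b} := by
  refine ⟨hq, ?_, ?_⟩
  · rw [Set.biInter_pair]; exact h1
  · rw [Set.biUnion_pair]; exact h2

lemma exists_strict_between [Fintype M] {a b : Set (M × M)} (ha : IsPO a) (hb : IsPO b)
    (hab : a ⊆ b) (hne : a ≠ b) (hnot : ¬ ∃ e, b \ a = {e}) :
    ∃ q, IsPO q ∧ a ⊆ q ∧ q ⊆ b ∧ q ≠ a ∧ q ≠ b := by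
  have hD : (b \ a).Nonempty :=
    Set.diff_nonempty.mpr (fun h => hne (Set.Subset.antisymm hab h))
  set I : M × M → Finset M := fun e =>
    Finset.univ.filter (fun z => (e.1, z) ∈ b ∧ (z, e.2) ∈ b) with hI
  obtain ⟨⟨x, y⟩, hxyD, hmin⟩ :=
    Set.exists_min_image (b \ a) (fun e => (I e).card) (Set.toFinite _) hD
  have hxyb : (x, y) ∈ b := hxyD.1
  have hxya : (x, y) ∉ a := hxyD.2
  have hxney : x ≠ y := by
    rintro rfl; exact hxya (ha.1 x)
  have hcov : ∀ z : M, (x, z) ∈ b → (z, y) ∈ b → z = x ∨ z = y := by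
    intro z hz1 hz2
    by_contra hcon
    push_neg at hcon
    obtain ⟨hzx, hzy⟩ := hcon
    have hone : (x, z) ∉ a ∨ (z, y) ∉ a := by
      by_contra h
      push_neg at h
      exact hxya (ha.2.2 x z y h.1 h.2)
    rcases hone with h | h
    · have hsubI : I (x, z) ⊂ I (x, y) := by
        constructor
        · intro w hw
          simp only [hI, Finset.mem_filter, Finset.mem_univ, true_and] at hw ⊢
          exact ⟨hw.1, hb.2.2 w z y hw.2 hz2⟩
        · intro hsub
          have hyI : y ∈ I (x, y) := by
            simp only [hI, Finset.mem_filter, Finset.mem_univ, true_and]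
            exact ⟨hxyb, hb.1 y⟩
          have := hsub hyI
          simp only [hI, Finset.mem_filter, Finset.mem_univ, true_and] at this
          exact hzy (hb.2.1 z y hz2 this.2)
      have := hmin (x, z) ⟨hz1, h⟩
      exact absurd this (not_le.mpr (Finset.card_lt_card hsubI))
    · have hsubI : I (z, y) ⊂ I (x, y) := by
        constructor
        · intro w hw
          simp only [hI, Finset.mem_filter, Finset.mem_univ, true_and] at hw ⊢
          exact ⟨hb.2.2 x z w hz1 hw.1, hw.2⟩
        · intro hsub
          have hxI : x ∈ I (x, y) := by
            simp only [hI, Finset.mem_filter, Finset.mem_univ, true_and]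
            exact ⟨hb.1 x, hxyb⟩
          have := hsub hxI
          simp only [hI, Finset.mem_filter, Finset.mem_univ, true_and] at this
          exact hzx (hb.2.1 z x this.1 hz1)
      have := hmin (z, y) ⟨hz2, h⟩
      exact absurd this (not_le.mpr (Finset.card_lt_card hsubI))
  refine ⟨b \ {(x, y)}, ⟨?_, ?_, ?_⟩, ?_, Set.diff_subset, ?_, ?_⟩
  · intro w
    refine ⟨hb.1 w, ?_⟩
    simp only [Set.mem_singleton_iff, Prod.mk.injEq]
    rintro ⟨rfl, rfl⟩
    exact hxney rfl
  · exact fun u v h1 h2 => hb.2.1 u v h1.1 h2.1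
  · intro u v w h1 h2
    refine ⟨hb.2.2 u v w h1.1 h2.1, ?_⟩
    simp only [Set.mem_singleton_iff, Prod.mk.injEq]
    rintro ⟨rfl, rfl⟩
    rcases hcov v h1.1 h2.1 with rfl | rfl
    · exact h2.2 (Set.mem_singleton _)
    · exact h1.2 (Set.mem_singleton _)
  · intro e he
    refine ⟨hab he, ?_⟩
    simp only [Set.mem_singleton_iff]
    rintro rfl
    exact hxya he
  · have : ∃ e' ∈ b \ a, e' ≠ (x, y) := by
      by_contra h
      push_neg at h
      exact hnot ⟨(x, y), Set.Subset.antisymm h (by rintro e rfl; exact hxyD)⟩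
    obtain ⟨e', he', hne'⟩ := this
    intro hqa
    have : e' ∈ a := hqa ▸ (⟨he'.1, by simpa using hne'⟩ : e' ∈ b \ {(x, y)})
    exact he'.2 this
  · intro hqb
    have : (x, y) ∈ b \ {(x, y)} := by rw [hqb]; exact hxyb
    exact this.2 (Set.mem_singleton _)

lemma cover_of_not_ufg [Fintype M] [Nonempty M] {a b : Set (M × M)} (ha : a ∈ Posets M)
    (hb : b ∈ Posets M) (hab : a ≠ b) (h : ¬ IsUfg {a, b}) :
    (a ⊆ b ∧ ∃ e, b \ a = {e}) ∨ (b ⊆ a ∧ ∃ e, a \ b = {e}) := by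
  by_cases h1 : a ⊆ b
  · left
    refine ⟨h1, ?_⟩
    by_contra hne'
    obtain ⟨q, hq, hq1, hq2, hq3, hq4⟩ := exists_strict_between ha hb h1 hab hne'
    exact h (ufg_pair ha hb hab
      (mem_gam_pair hq (Set.inter_subset_left.trans hq1)
        (hq2.trans Set.subset_union_right)) hq3 hq4)
  · by_cases h2 : b ⊆ a
    · right
      refine ⟨h2, ?_⟩
      by_contra hne'
      obtain ⟨q, hq, hq1, hq2, hq3, hq4⟩ :=
        exists_strict_between hb ha h2 (Ne.symm hab) hne'
      exact h (ufg_pair ha hb hab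
        (mem_gam_pair hq (Set.inter_subset_right.trans hq1)
          (hq2.trans Set.subset_union_left)) hq4 hq3)
    · exfalso
      have hiq : (a ∩ b) ∈ gam {a, b} :=
        mem_gam_pair (isPO_inter ha hb) subset_rfl
          (Set.inter_subset_left.trans Set.subset_union_left)
      refine h (ufg_pair ha hb hab hiq ?_ ?_)
      · intro he
        apply h1
        intro x hx
        rw [← he] at hx
        exact hx.2
      · intro he
        apply h2
        intro x hx
        rw [← he] at hx
        exact hx.1

lemma not_ufg_subset_pair [Nonempty M] {p₁ p₂ : Set (M × M)} (h12 : p₁ ⊆ p₂)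
    {e : M × M} (he : p₂ \ p₁ = {e}) {S : Set (Set (M × M))} (hS : S ⊆ {p₁, p₂}) :
    ¬ IsUfg S := by
  intro hufg
  by_cases hsub : S.Subsingleton
  · exact not_ufg_of_subsingleton hsub hufg
  have hSeq : S = {p₁, p₂} := eq_pair_of_subset hS hsub
  subst hSeq
  obtain ⟨hsubst, hlt, _⟩ := hufg
  obtain ⟨q, hq, hqS⟩ := Set.exists_of_ssubset hlt
  have h1 : p₁ ⊆ q := by
    have h := hq.2.1
    rw [Set.biInter_pair] at h
    exact fun x hx => h ⟨hx, h12 hx⟩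
  have h2 : q ⊆ p₂ := by
    have h := hq.2.2
    rw [Set.biUnion_pair] at h
    exact fun x hx => (h hx).elim (fun hh => h12 hh) id
  have hp2 : ∀ w ∈ p₂, w ∈ p₁ ∨ w = e := by
    intro w hw
    by_cases hwp : w ∈ p₁
    · exact Or.inl hwp
    · refine Or.inr ?_
      have : w ∈ p₂ \ p₁ := ⟨hw, hwp⟩
      rwa [he] at this
  apply hqS
  by_cases he' : e ∈ q
  · have : q = p₂ := by
      apply Set.Subset.antisymm h2
      intro w hw
      rcases hp2 w hw with hwp | rfl
      · exact h1 hwp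
      · exact he'
    rw [this]
    exact Set.mem_insert_iff.mpr (Or.inr rfl)
  · have : q = p₁ := by
      apply Set.Subset.antisymm _ h1
      intro w hw
      rcases hp2 w (h2 hw) with hwp | rfl
      · exact hwp
      · exact absurd hw he'
    rw [this]
    exact Set.mem_insert _ _

lemma finprod_mem_zero_of_mem [Fintype M] {ν : Set (M × M) → ℝ} {S : Set (Set (M × M))}
    {q : Set (M × M)} (hq : q ∈ S) (h0 : ν q = 0) : (∏ᶠ r ∈ S, ν r) = 0 := by
  have hfin : S.Finite := Set.toFinite S
  rw [← hfin.coe_toFinset, finprod_mem_coe_finset]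
  exact Finset.prod_eq_zero (hfin.mem_toFinset.mpr hq) h0

lemma finprod_mem_nonneg' [Fintype M] {ν : Set (M × M) → ℝ} (hpos : ∀ q, 0 ≤ ν q)
    (S : Set (Set (M × M))) : 0 ≤ ∏ᶠ r ∈ S, ν r := by
  have hfin : S.Finite := Set.toFinite S
  rw [← hfin.coe_toFinset, finprod_mem_coe_finset]
  exact Finset.prod_nonneg (fun i _ => hpos i)

lemma popDepth_zero_iff [Fintype M] [Nonempty M] (ν : Set (M × M) → ℝ)
    (hpos : ∀ q, 0 ≤ ν q) :
    (∀ p ∈ Posets M, popDepth ν p = 0) ↔ ∀ S, IsUfg S → (∏ᶠ q ∈ S, ν q) = 0 := by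
  constructor
  · intro H
    by_contra hcon
    push_neg at hcon
    obtain ⟨S₀, hS₀, hprod⟩ := hcon
    have hprodpos : 0 < ∏ᶠ q ∈ S₀, ν q :=
      lt_of_le_of_ne (finprod_mem_nonneg' hpos S₀) (Ne.symm hprod)
    obtain ⟨p₀, hp₀, _⟩ := Set.exists_of_ssubset hS₀.2.1
    have hzero := H p₀ hp₀.1
    unfold popDepth at hzero
    rw [if_neg (by push_neg; exact ⟨S₀, hS₀, hprod⟩)] at hzero
    have hfinU : ({S : Set (Set (M × M)) | IsUfg S}).Finite := Set.toFinite _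
    have hfinUp : ({S : Set (Set (M × M)) | IsUfg S ∧ p₀ ∈ gam S}).Finite := Set.toFinite _
    have hc : 0 < ∑ᶠ S ∈ {S : Set (Set (M × M)) | IsUfg S}, ∏ᶠ q ∈ S, ν q := by
      rw [← hfinU.coe_toFinset, finsum_mem_coe_finset]
      exact Finset.sum_pos' (fun i _ => finprod_mem_nonneg' hpos i)
        ⟨S₀, hfinU.mem_toFinset.mpr hS₀, hprodpos⟩
    have hs : 0 < ∑ᶠ S ∈ {S : Set (Set (M × M)) | IsUfg S ∧ p₀ ∈ gam S}, ∏ᶠ q ∈ S, ν q := by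
      rw [← hfinUp.coe_toFinset, finsum_mem_coe_finset]
      exact Finset.sum_pos' (fun i _ => finprod_mem_nonneg' hpos i)
        ⟨S₀, hfinUp.mem_toFinset.mpr ⟨hS₀, hp₀⟩, hprodpos⟩
    exact absurd hzero (ne_of_gt (mul_pos (inv_pos.mpr hc) hs))
  · intro H p _
    unfold popDepth
    rw [if_pos H]

theorem stmt16 {M : Type*} [Fintype M] [Nonempty M] (ν : Set (M × M) → ℝ)
    (hpos : ∀ q, 0 ≤ ν q) (hsupp : ∀ q, ν q ≠ 0 → q ∈ Posets M)
    (hsum : ∑ᶠ q ∈ Posets M, ν q = 1) :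
    (∀ p ∈ Posets M, popDepth ν p = 0) ↔
      ((∃ p ∈ Posets M, ν p = 1) ∨
        (∃ p₁ p₂ : Set (M × M), p₁ ∈ Posets M ∧ p₂ ∈ Posets M ∧ p₁ ⊆ p₂ ∧
          (∃ e : M × M, p₂ \ p₁ = {e}) ∧
          ν p₁ ≠ 0 ∧ ν p₂ ≠ 0 ∧ ν p₁ + ν p₂ = 1)) := by
  rw [popDepth_zero_iff ν hpos]
  have hPfin : (Posets M).Finite := Set.toFinite _
  set P : Finset (Set (M × M)) := hPfin.toFinset with hPdef
  have hsum' : ∑ q ∈ P, ν q = 1 := by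
    rw [← finsum_mem_coe_finset, hPdef, hPfin.coe_toFinset]
    exact hsum
  have hmemP : ∀ q, ν q ≠ 0 → q ∈ P := fun q h => hPfin.mem_toFinset.mpr (hsupp q h)
  constructor
  · intro H
    set T : Finset (Set (M × M)) := P.filter (fun q => ν q ≠ 0) with hTdef
    have hTP : T ⊆ P := Finset.filter_subset _ _
    have hmemT : ∀ q, ν q ≠ 0 → q ∈ T := fun q h => Finset.mem_filter.mpr ⟨hmemP q h, h⟩
    have hνT : ∀ q ∈ T, ν q ≠ 0 := fun q hq => (Finset.mem_filter.mp hq).2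
    have hposetT : ∀ q ∈ T, q ∈ Posets M := fun q hq => hPfin.mem_toFinset.mp (hTP hq)
    have hsumT : ∑ q ∈ T, ν q = 1 := by
      rw [← hsum']
      exact Finset.sum_subset hTP (fun x _ hxT => by
        by_contra h0; exact hxT (hmemT x h0))
    have hTne : T.Nonempty := by
      rw [Finset.nonempty_iff_ne_empty]
      intro h
      rw [h] at hsumT
      simp at hsumT
    obtain ⟨p, hpT⟩ := hTne
    have hcov : ∀ x ∈ T, ∀ y ∈ T, x ≠ y →
        (x ⊆ y ∧ ∃ e, y \ x = {e}) ∨ (y ⊆ x ∧ ∃ e, x \ y = {e}) := by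
      intro x hx y hy hxy
      apply cover_of_not_ufg (hposetT x hx) (hposetT y hy) hxy
      intro hufg
      have hprod := H _ hufg
      rw [finprod_mem_pair hxy] at hprod
      exact (mul_ne_zero (hνT x hx) (hνT y hy)) hprod
    by_cases hone : ∀ q ∈ T, q = p
    · left
      refine ⟨p, hposetT p hpT, ?_⟩
      have hTeq : T = {p} := Finset.eq_singleton_iff_unique_mem.mpr ⟨hpT, hone⟩
      rw [hTeq, Finset.sum_singleton] at hsumT
      exact hsumT
    · push_neg at hone
      obtain ⟨b, hbT, hbp⟩ := hone
      obtain ⟨p₁, p₂, hp₁T, hp₂T, h12ne, hsub12, e, he⟩ :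
          ∃ p₁ p₂, p₁ ∈ T ∧ p₂ ∈ T ∧ p₁ ≠ p₂ ∧ p₁ ⊆ p₂ ∧ ∃ e, p₂ \ p₁ = {e} := by
        rcases hcov p hpT b hbT (Ne.symm hbp) with ⟨h, e, heq⟩ | ⟨h, e, heq⟩
        · exact ⟨p, b, hpT, hbT, Ne.symm hbp, h, e, heq⟩
        · exact ⟨b, p, hbT, hpT, hbp, h, e, heq⟩
      have heD : e ∈ p₂ \ p₁ := by rw [he]; exact Set.mem_singleton _
      have hTtwo : ∀ c ∈ T, c = p₁ ∨ c = p₂ := by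
        intro c hc
        by_contra hcon
        push_neg at hcon
        obtain ⟨hc1, hc2⟩ := hcon
        rcases hcov c hc p₁ hp₁T hc1 with ⟨h, f, hf⟩ | ⟨h, f, hf⟩
        · -- c ⊆ p₁, p₁ \ c = {f}
          have hfD : f ∈ p₁ \ c := by rw [hf]; exact Set.mem_singleton _
          rcases hcov c hc p₂ hp₂T hc2 with ⟨h', g, hg⟩ | ⟨h', g, hg⟩
          · have h1g : f ∈ p₂ \ c := ⟨hsub12 hfD.1, hfD.2⟩
            have h2g : e ∈ p₂ \ c := ⟨heD.1, fun hec => heD.2 (h hec)⟩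
            rw [hg, Set.mem_singleton_iff] at h1g h2g
            exact heD.2 (by rw [h2g, ← h1g]; exact hfD.1)
          · exact heD.2 (h (h' heD.1))
        · -- p₁ ⊆ c, c \ p₁ = {f}
          have hfD : f ∈ c \ p₁ := by rw [hf]; exact Set.mem_singleton _
          have hfe : f = e := by
            rcases hcov c hc p₂ hp₂T hc2 with ⟨h', g, hg⟩ | ⟨h', g, hg⟩
            · have : f ∈ p₂ \ p₁ := ⟨h' hfD.1, hfD.2⟩
              rw [he, Set.mem_singleton_iff] at this
              exact this
            · have : e ∈ c \ p₁ := ⟨h' heD.1, heD.2⟩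
              rw [hf, Set.mem_singleton_iff] at this
              exact this.symm
          apply hc2
          rw [← Set.diff_union_of_subset h, hf, hfe, ← he,
            Set.diff_union_of_subset hsub12]
      have hTeq : T = {p₁, p₂} := by
        apply Finset.ext
        intro q
        constructor
        · intro hq
          rcases hTtwo q hq with rfl | rfl
          · exact Finset.mem_insert_self _ _
          · exact Finset.mem_insert.mpr (Or.inr (Finset.mem_singleton_self _))
        · intro hq
          rcases Finset.mem_insert.mp hq with rfl | hq
          · exact hp₁T
          · rw [Finset.mem_singleton.mp hq]; exact hp₂T
      right
      refine ⟨p₁, p₂, hposetT _ hp₁T, hposetT _ hp₂T, hsub12, ⟨e, he⟩,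
        hνT _ hp₁T, hνT _ hp₂T, ?_⟩
      rw [hTeq, Finset.sum_pair h12ne] at hsumT
      exact hsumT
  · rintro (⟨p, hpP, hp1⟩ | ⟨p₁, p₂, hp₁P, hp₂P, hsub12, ⟨e, he⟩, hν₁, hν₂, hsum2⟩)
    · have hzero : ∀ q, q ≠ p → ν q = 0 := by
        intro q hq
        by_contra h0
        have hqP := hmemP q h0
        have hpP' : p ∈ P := hPfin.mem_toFinset.mpr hpP
        have hsubQ : ({p, q} : Finset (Set (M × M))) ⊆ P := by
          intro r hr
          rcases Finset.mem_insert.mp hr with rfl | hr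
          · exact hpP'
          · rw [Finset.mem_singleton.mp hr]; exact hqP
        have hle : ν p + ν q ≤ ∑ r ∈ P, ν r := by
          rw [← Finset.sum_pair (Ne.symm hq)]
          exact Finset.sum_le_sum_of_subset_of_nonneg hsubQ (fun i _ _ => hpos i)
        rw [hsum', hp1] at hle
        have hqpos : 0 < ν q := lt_of_le_of_ne (hpos q) (Ne.symm h0)
        linarith
      intro S hS
      by_cases hsub : S ⊆ {p}
      · exact absurd hS (not_ufg_of_subsingleton
          (fun x hx y hy => by rw [hsub hx, hsub hy]))
      · obtain ⟨q, hqS, hqp⟩ := Set.not_subset.mp hsub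
        exact finprod_mem_zero_of_mem hqS (hzero q (by simpa using hqp))
    · have h12ne : p₁ ≠ p₂ := by
        intro h
        rw [h, Set.diff_self] at he
        exact (Set.singleton_ne_empty e) he.symm
      have hzero : ∀ q, q ≠ p₁ → q ≠ p₂ → ν q = 0 := by
        intro q h1 h2
        by_contra h0
        have hqP := hmemP q h0
        have hp₁P' : p₁ ∈ P := hPfin.mem_toFinset.mpr hp₁P
        have hp₂P' : p₂ ∈ P := hPfin.mem_toFinset.mpr hp₂P
        have hsubQ : ({p₁, p₂, q} : Finset (Set (M × M))) ⊆ P := by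
          intro r hr
          rcases Finset.mem_insert.mp hr with rfl | hr
          · exact hp₁P'
          rcases Finset.mem_insert.mp hr with rfl | hr
          · exact hp₂P'
          rw [Finset.mem_singleton.mp hr]
          exact hqP
        have hsum3 : ∑ r ∈ ({p₁, p₂, q} : Finset (Set (M × M))), ν r
            = ν p₁ + (ν p₂ + ν q) := by
          rw [Finset.sum_insert (by simp [h12ne, Ne.symm h1]),
            Finset.sum_pair (Ne.symm h2)]
        have hle : ν p₁ + (ν p₂ + ν q) ≤ ∑ r ∈ P, ν r := by
          rw [← hsum3]
          exact Finset.sum_le_sum_of_subset_of_nonneg hsubQ (fun i _ _ => hpos i)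
        rw [hsum'] at hle
        have hqpos : 0 < ν q := lt_of_le_of_ne (hpos q) (Ne.symm h0)
        linarith
      intro S hS
      by_cases hsub : S ⊆ {p₁, p₂}
      · exact absurd hS (not_ufg_subset_pair hsub12 he hsub)
      · obtain ⟨q, hqS, hq⟩ := Set.not_subset.mp hsub
        simp only [Set.mem_insert_iff, Set.mem_singleton_iff] at hq
        push_neg at hq
        exact finprod_mem_zero_of_mem hqS (hzero q hq.1 hq.2)
end
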